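/- arXiv:2105.05151 — 4 statements merged into one kernel-verified Lean document; each statement's English description precedes it below -/
import Mathlib

section
/- Let G_s be a scaled integer grid in ℝ^d with spacing α and let G_{s+1} = 2(G_s - O) + O + (α/2)v where O ∈ G_s and v ∈ {-1,+1}^d. Then for any x ∈ G_s and y ∈ G_{s+1} with x in the Voronoi cell of y (with respect to G_{s+1}, in the L∞ norm), the Voronoi cell of x with respect to G_s is contained in the Voronoi cell of y with respect to G_{s+1}. -/
/-!
Every point of `ℝ^d` lies within `α/2` (in `L∞`) of the grid `O + αℤ^d`, so the Voronoi cell of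
`x` has radius `α/2`. A point of `O + αℤ^d` is even within `α/2` of the coarser grid
`G_{s+1}`: coordinatewise this is the parity fact that `z - v/2` is at distance `1/2` from `2ℤ`.
Hence `x` is `α/2`-close to `y`, the cell of `x` lies in the ball of radius `α` around `y`, and
since distinct points of `G_{s+1}` are at distance at least `2α`, that ball lies in the Voronoi
cell of `y`.
-/

def voronoiCell {E : Type*} [PseudoMetricSpace E] (S : Set E) (x : E) : Set E :=
  {p | ∀ y ∈ S, dist p x ≤ dist p y}

theorem mem_voronoiCell_of_dist_le {E : Type*} [PseudoMetricSpace E] {S : Set E} {y p : E}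
    {r : ℝ} (hsep : ∀ y' ∈ S, y' ≠ y → 2 * r ≤ dist y y') (hp : dist p y ≤ r) :
    p ∈ voronoiCell S y := by
  intro y' hy'
  rcases eq_or_ne y' y with rfl | hne
  · exact le_rfl
  · have := hsep y' hy' hne
    linarith [dist_triangle_left y y' p]

def scaledGrid {ι : Type*} (c : ι → ℝ) (α : ℝ) : Set (ι → ℝ) :=
  {x | ∃ z : ι → ℤ, ∀ i, x i = c i + α * z i}

theorem exists_int_abs_sub_le_half (z : ℤ) {s : ℝ} (hs : s = 1 ∨ s = -1) :
    ∃ m : ℤ, |(z : ℝ) - 2 * m - s / 2| ≤ 1 / 2 := by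
  obtain ⟨k, rfl | rfl⟩ := Int.even_or_odd' z <;> rcases hs with rfl | rfl
  · exact ⟨k, by push_cast; rw [abs_le]; constructor <;> linarith⟩
  · exact ⟨k, by push_cast; rw [abs_le]; constructor <;> linarith⟩
  · exact ⟨k, by push_cast; rw [abs_le]; constructor <;> linarith⟩
  · exact ⟨k + 1, by push_cast; rw [abs_le]; constructor <;> linarith⟩

section ScaledGrid

variable {ι : Type*} [Fintype ι]

theorem exists_mem_scaledGrid_dist_le {α : ℝ} (hα : 0 < α) (c p : ι → ℝ) :
    ∃ g ∈ scaledGrid c α, dist p g ≤ α / 2 := by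
  refine ⟨_, ⟨fun i => round ((p i - c i) / α), fun i => rfl⟩, ?_⟩
  refine (dist_pi_le_iff (by positivity)).2 fun i => ?_
  have hround := abs_sub_round ((p i - c i) / α)
  calc dist (p i) (c i + α * round ((p i - c i) / α))
      = |α * ((p i - c i) / α - round ((p i - c i) / α))| := by
        rw [Real.dist_eq, mul_sub, mul_div_cancel₀ _ hα.ne']
        ring_nf
    _ ≤ α / 2 := by rw [abs_mul, abs_of_pos hα]; nlinarith

theorem dist_le_of_mem_voronoiCell_scaledGrid {α : ℝ} (hα : 0 < α) {c x p : ι → ℝ}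
    (hp : p ∈ voronoiCell (scaledGrid c α) x) : dist p x ≤ α / 2 := by
  obtain ⟨g, hg, hpg⟩ := exists_mem_scaledGrid_dist_le hα c p
  exact (hp g hg).trans hpg

theorem le_dist_of_mem_scaledGrid {α : ℝ} (hα : 0 ≤ α) {c y y' : ι → ℝ}
    (hy : y ∈ scaledGrid c α) (hy' : y' ∈ scaledGrid c α) (hne : y ≠ y') : α ≤ dist y y' := by
  obtain ⟨w, hw⟩ := hy
  obtain ⟨w', hw'⟩ := hy'
  obtain ⟨i, hi⟩ := Function.ne_iff.1 hne
  have hwi : w i ≠ w' i := fun h => hi (by rw [hw, hw', h])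
  have hone : (1 : ℝ) ≤ |(w i : ℝ) - w' i| := by
    exact_mod_cast Int.one_le_abs (sub_ne_zero.2 hwi)
  calc α ≤ α * |(w i : ℝ) - w' i| := le_mul_of_one_le_right hα hone
    _ = |α * ((w i : ℝ) - w' i)| := by rw [abs_mul, abs_of_nonneg hα]
    _ = dist (y i) (y' i) := by rw [Real.dist_eq, hw, hw']; ring_nf
    _ ≤ dist y y' := dist_le_pi_dist y y' i

theorem exists_mem_scaledGrid_two_mul_dist_le {α : ℝ} (hα : 0 ≤ α) {c v x : ι → ℝ}
    (hv : ∀ i, v i = 1 ∨ v i = -1) (hx : x ∈ scaledGrid c α) :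
    ∃ y ∈ scaledGrid (fun i => c i + α / 2 * v i) (2 * α), dist x y ≤ α / 2 := by
  obtain ⟨z, hz⟩ := hx
  choose m hm using fun i => exists_int_abs_sub_le_half (z i) (hv i)
  refine ⟨_, ⟨m, fun i => rfl⟩, (dist_pi_le_iff (by positivity)).2 fun i => ?_⟩
  calc dist (x i) (c i + α / 2 * v i + 2 * α * m i)
      = |α * ((z i : ℝ) - 2 * m i - v i / 2)| := by rw [Real.dist_eq, hz]; ring_nf
    _ ≤ α / 2 := by rw [abs_mul, abs_of_nonneg hα]; nlinarith [hm i]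

end ScaledGrid

theorem stmt_1_general (d : ℕ) (α : ℝ) (hα : 0 < α)
    (O : Fin d → ℝ) (v : Fin d → ℝ) (hv : ∀ i, v i = 1 ∨ v i = -1) :
    let G : Set (Fin d → ℝ) := {x | ∃ z : Fin d → ℤ, ∀ i, x i = O i + α * (z i : ℝ)}
    let G' : Set (Fin d → ℝ) :=
      {x | ∃ z : Fin d → ℤ, ∀ i, x i = O i + 2 * α * (z i : ℝ) + α / 2 * v i}
    let Vor : Set (Fin d → ℝ) → (Fin d → ℝ) → Set (Fin d → ℝ) :=
      fun S x => {p | ∀ y ∈ S, dist p x ≤ dist p y}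
    ∀ x ∈ G, ∀ y ∈ G', x ∈ Vor G' y → Vor G x ⊆ Vor G' y := by
  intro G G' Vor x hx y hy hxy p hp
  have hG' : G' = scaledGrid (fun i => O i + α / 2 * v i) (2 * α) := by
    ext q
    refine exists_congr fun z => forall_congr' fun i => ?_
    ring_nf
  change p ∈ voronoiCell G x at hp
  rw [hG'] at hy hxy ⊢
  obtain ⟨y₀, hy₀, hxy₀⟩ := exists_mem_scaledGrid_two_mul_dist_le hα.le hv hx
  have hdxy : dist x y ≤ α / 2 := (hxy y₀ hy₀).trans hxy₀
  have hdpx : dist p x ≤ α / 2 := dist_le_of_mem_voronoiCell_scaledGrid hα hp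
  refine mem_voronoiCell_of_dist_le (r := α) (fun y' hy' hne => ?_) ?_
  · exact le_dist_of_mem_scaledGrid (by positivity) hy hy' hne.symm
  · linarith [dist_triangle p x y]

/-- For consecutive shifted grids `G_s = O + αℤ^d` and
`G_{s+1} = 2(G_s - O) + O + (α/2)v` with `v ∈ {±1}^d`, if `x ∈ G_s` lies in the
L∞-Voronoi cell of `y ∈ G_{s+1}`, then the whole Voronoi cell of `x` w.r.t. `G_s`
is contained in the Voronoi cell of `y` w.r.t. `G_{s+1}`. -/
theorem stmt_1 (d : ℕ) (hd : 1 ≤ d) (α : ℝ) (hα : 0 < α)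
    (O : Fin d → ℝ) (v : Fin d → ℝ) (hv : ∀ i, v i = 1 ∨ v i = -1) :
    let G : Set (Fin d → ℝ) := {x | ∃ z : Fin d → ℤ, ∀ i, x i = O i + α * (z i : ℝ)}
    let G' : Set (Fin d → ℝ) :=
      {x | ∃ z : Fin d → ℤ, ∀ i, x i = O i + 2 * α * (z i : ℝ) + α / 2 * v i}
    let Vor : Set (Fin d → ℝ) → (Fin d → ℝ) → Set (Fin d → ℝ) :=
      fun S x => {p | ∀ y ∈ S, dist p x ≤ dist p y}
    ∀ x ∈ G, ∀ y ∈ G', x ∈ Vor G' y → Vor G x ⊆ Vor G' y :=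
  stmt_1_general d α hα O v hv
end

section
/- Let f be a k-face of the unit cubical complex on ℤ^d and let g be a map sending each vertex of ℤ^d to a vertex of a coarser shifted grid 2ℤ^d + v, with v ∈ {1/2}·{-1,1}^d, such that g is the nearest-point (Voronoi) assignment. Then the images under g of the 2^k vertices of f form the vertex set of a face e of the coarser cubical complex. -/
/-- The vertex set of the face of the cubical grid complex with spacing `α`, base vertex `b`
and set `S` of non-degenerate coordinate directions. -/
def cubeVerts (d : ℕ) (α : ℝ) (b : Fin d → ℝ) (S : Finset (Fin d)) : Set (Fin d → ℝ) :=
  {x | ∀ i, if i ∈ S then x i = b i ∨ x i = b i + α else x i = b i}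

/-- Let `f` be a `k`-face of the cubical complex on the grid `αℤ^d` and let
`g x i = h i (x i)` be the nearest-point (Voronoi) assignment towards the coarser shifted grid
`2αℤ^d + (α/2)v` (it moves every coordinate by exactly `±α/2`, the direction depending only
on the coordinate value, and lands on the coarse grid). Then the images of the `2^k` vertices
of `f` form the vertex set of a face of the coarser cubical complex. -/
theorem stmt_4 (d : ℕ) (α : ℝ) (hα : 0 < α) (k : ℕ)
    (b : Fin d → ℝ) (S : Finset (Fin d)) (hk : S.card = k)
    (hb : ∀ i, ∃ z : ℤ, b i = α * (z : ℝ))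
    (v : Fin d → ℝ) (hv : ∀ i, v i = 1 ∨ v i = -1)
    (h : Fin d → ℝ → ℝ)
    (hmove : ∀ i t, h i t = t + α / 2 ∨ h i t = t - α / 2)
    (hcoarse : ∀ i (t : ℝ), (∃ z : ℤ, t = α * (z : ℝ)) →
      ∃ w : ℤ, h i t = 2 * α * (w : ℝ) + α / 2 * v i) :
    ∃ (b' : Fin d → ℝ) (S' : Finset (Fin d)),
      (∀ i, ∃ w : ℤ, b' i = 2 * α * (w : ℝ) + α / 2 * v i) ∧
      (fun x i => h i (x i)) '' cubeVerts d α b S = cubeVerts d (2 * α) b' S' := by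
  classical
  have key : ∀ i ∈ S, h i (b i + α) = h i (b i) ∨ h i (b i + α) = h i (b i) + 2 * α := by
    intro i _
    obtain ⟨z, hz⟩ := hb i
    obtain ⟨w, hw⟩ := hcoarse i (b i) ⟨z, hz⟩
    obtain ⟨w', hw'⟩ := hcoarse i (b i + α) ⟨z + 1, by push_cast; linarith⟩
    have hD1 : h i (b i + α) - h i (b i) = 2 * α * ((w' : ℝ) - w) := by
      rw [hw, hw']; ring
    have hD2 : 0 ≤ h i (b i + α) - h i (b i) ∧ h i (b i + α) - h i (b i) ≤ 2 * α := by
      rcases hmove i (b i + α) with h1 | h1 <;> rcases hmove i (b i) with h2 | h2 <;>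
        constructor <;> rw [h1, h2] <;> linarith
    have h2α : (0:ℝ) < 2 * α := by linarith
    have h0 : (0:ℝ) ≤ (w' : ℝ) - w := by
      nlinarith [hD2.1, hD1]
    have h1 : ((w' : ℝ) - w) ≤ 1 := by
      nlinarith [hD2.2, hD1]
    have h0' : (0:ℤ) ≤ w' - w := by exact_mod_cast (by push_cast; linarith : (0:ℝ) ≤ ((w' - w : ℤ):ℝ))
    have h1' : (w' - w : ℤ) ≤ 1 := by exact_mod_cast (by push_cast; linarith : ((w' - w : ℤ):ℝ) ≤ 1)
    have : w' - w = 0 ∨ w' - w = 1 := by omega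
    rcases this with hm | hm
    · left
      have : (w' : ℝ) = w := by
        have := congrArg (fun z : ℤ => (z : ℝ)) hm
        push_cast at this; linarith
      rw [hw, hw', this]
    · right
      have : (w' : ℝ) = w + 1 := by
        have := congrArg (fun z : ℤ => (z : ℝ)) hm
        push_cast at this; linarith
      rw [hw, hw', this]; ring
  refine ⟨fun i => h i (b i),
    S.filter (fun i => h i (b i + α) ≠ h i (b i)), fun i => hcoarse i (b i) (hb i), ?_⟩
  ext x
  simp only [Set.mem_image, cubeVerts, Set.mem_setOf_eq]
  constructor
  · rintro ⟨y, hy, rfl⟩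
    intro i
    show if i ∈ S.filter (fun i => h i (b i + α) ≠ h i (b i)) then
        h i (y i) = h i (b i) ∨ h i (y i) = h i (b i) + 2 * α
      else h i (y i) = h i (b i)
    have hyi := hy i
    by_cases hiS : i ∈ S
    · rw [if_pos hiS] at hyi
      by_cases hne : h i (b i + α) = h i (b i)
      · have hfi : i ∉ S.filter (fun i => h i (b i + α) ≠ h i (b i)) := by
          simp [hne]
        rw [if_neg hfi]
        rcases hyi with h1 | h1 <;> rw [h1]
        exact hne
      · have hfi : i ∈ S.filter (fun i => h i (b i + α) ≠ h i (b i)) := by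
          simp [hiS, hne]
        rw [if_pos hfi]
        rcases hyi with h1 | h1
        · left; rw [h1]
        · right; rw [h1]
          exact (key i hiS).resolve_left hne
    · rw [if_neg hiS] at hyi
      have hfi : i ∉ S.filter (fun i => h i (b i + α) ≠ h i (b i)) := by
        simp [hiS]
      rw [if_neg hfi, hyi]
  · intro hx
    refine ⟨fun i => if i ∈ S ∧ x i = h i (b i + α) then b i + α else b i, ?_, ?_⟩
    · intro i
      show if i ∈ S then
          (if i ∈ S ∧ x i = h i (b i + α) then b i + α else b i) = b i ∨
          (if i ∈ S ∧ x i = h i (b i + α) then b i + α else b i) = b i + α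
        else (if i ∈ S ∧ x i = h i (b i + α) then b i + α else b i) = b i
      by_cases hiS : i ∈ S
      · rw [if_pos hiS]
        by_cases hc : i ∈ S ∧ x i = h i (b i + α)
        · rw [if_pos hc]; right; rfl
        · rw [if_neg hc]; left; rfl
      · rw [if_neg hiS, if_neg (fun hc => hiS hc.1)]
    · funext i
      show h i (if i ∈ S ∧ x i = h i (b i + α) then b i + α else b i) = x i
      have hxi := hx i
      by_cases hiS : i ∈ S
      · by_cases hne : h i (b i + α) = h i (b i)
        · have hfi : i ∉ S.filter (fun i => h i (b i + α) ≠ h i (b i)) := by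
            simp [hne]
          rw [if_neg hfi] at hxi
          by_cases hc : i ∈ S ∧ x i = h i (b i + α)
          · rw [if_pos hc, hne]; exact hxi.symm
          · rw [if_neg hc]; exact hxi.symm
        · have hfi : i ∈ S.filter (fun i => h i (b i + α) ≠ h i (b i)) := by
            simp [hiS, hne]
          rw [if_pos hfi] at hxi
          have h2 : h i (b i + α) = h i (b i) + 2 * α := (key i hiS).resolve_left hne
          rcases hxi with h1 | h1
          · have hc : ¬(i ∈ S ∧ x i = h i (b i + α)) := by
              rintro ⟨_, hc2⟩; rw [h1] at hc2; rw [h2] at hc2; linarith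
            rw [if_neg hc]; exact h1.symm
          · have hc : i ∈ S ∧ x i = h i (b i + α) := ⟨hiS, by rw [h1, h2]⟩
            rw [if_pos hc]; exact hc.2.symm
      · have hfi : i ∉ S.filter (fun i => h i (b i + α) ≠ h i (b i)) := by
          simp [hiS]
        rw [if_neg hfi] at hxi
        rw [if_neg (fun hc => hiS hc.1)]
        exact hxi.symm
end

section
/- Let g be a cubical map (nearest-point assignment between shifted grids as in the shifted-lattice construction) from the cubical complex on G_s to the cubical complex on G_{s+1}, let f be a face of the complex on G_s, and let e = g(f). Then for every pair of opposite facets e₁, e₂ of e there exists a pair of opposite facets f₁, f₂ of f with g(f₁) = e₁ and g(f₂) = e₂. -/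
lemma cubeVerts_eq (d : ℕ) (α : ℝ) (b : Fin d → ℝ) (S : Finset (Fin d)) :
    cubeVerts d α b S
      = {x | ∀ i, x i ∈ (if i ∈ S then ({b i, b i + α} : Set ℝ) else {b i})} := by
  ext x
  simp only [cubeVerts, Set.mem_setOf_eq]
  refine forall_congr' fun i => ?_
  split <;> simp

lemma imageProd {d : ℕ} (h : Fin d → ℝ → ℝ) (A : Fin d → Set ℝ) :
    (fun x i => h i (x i)) '' {x : Fin d → ℝ | ∀ i, x i ∈ A i}
      = {y | ∀ i, y i ∈ h i '' (A i)} := by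
  ext y
  constructor
  · rintro ⟨x, hx, rfl⟩ i
    exact ⟨x i, hx i, rfl⟩
  · intro hy
    choose x hx hhx using hy
    exact ⟨x, hx, funext hhx⟩

lemma setOf_forall_congr {d : ℕ} {P Q : Fin d → Set ℝ} (h : ∀ i, P i = Q i) :
    {x : Fin d → ℝ | ∀ i, x i ∈ P i} = {x | ∀ i, x i ∈ Q i} := by
  ext x
  exact forall_congr' fun i => by rw [h i]

lemma coordEq {d : ℕ} {P Q : Fin d → Set ℝ} (hP : ∀ i, (P i).Nonempty)
    (hPQ : {x : Fin d → ℝ | ∀ i, x i ∈ P i} = {x | ∀ i, x i ∈ Q i}) :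
    ∀ i, P i = Q i := by
  choose p hp using hP
  have hpQ : ∀ i, p i ∈ Q i := by
    have : p ∈ {x : Fin d → ℝ | ∀ i, x i ∈ Q i} := hPQ ▸ hp
    exact this
  intro i
  ext t
  constructor
  · intro ht
    have hx : Function.update p i t ∈ {x : Fin d → ℝ | ∀ i, x i ∈ P i} := by
      intro k
      rcases eq_or_ne k i with rfl | hk
      · simpa using ht
      · simpa [Function.update_of_ne hk] using hp k
    have := hPQ ▸ hx
    simpa using this i
  · intro ht
    have hx : Function.update p i t ∈ {x : Fin d → ℝ | ∀ i, x i ∈ Q i} := by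
      intro k
      rcases eq_or_ne k i with rfl | hk
      · simpa using ht
      · simpa [Function.update_of_ne hk] using hpQ k
    have := hPQ.symm ▸ hx
    simpa using this i

/-- Let `g x i = h i (x i)` be the nearest-point cubical map from the grid `αℤ^d`
to the coarser shifted grid `2αℤ^d + (α/2)v`, let `f = (b, S)` be a face of the fine complex
and `e = (b', S') = g(f)` its image face.  Then for every pair of opposite facets
`e₁, e₂` of `e` (determined by a direction `j ∈ S'`) there is a pair of opposite facets
`f₁, f₂` of `f` (determined by some direction `j' ∈ S`) with `g(f₁) = e₁` and `g(f₂) = e₂`. -/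
theorem stmt_5 (d : ℕ) (α : ℝ) (hα : 0 < α)
    (b : Fin d → ℝ) (S : Finset (Fin d))
    (hb : ∀ i, ∃ z : ℤ, b i = α * (z : ℝ))
    (v : Fin d → ℝ) (hv : ∀ i, v i = 1 ∨ v i = -1)
    (h : Fin d → ℝ → ℝ)
    (hmove : ∀ i t, h i t = t + α / 2 ∨ h i t = t - α / 2)
    (hcoarse : ∀ i (t : ℝ), (∃ z : ℤ, t = α * (z : ℝ)) →
      ∃ w : ℤ, h i t = 2 * α * (w : ℝ) + α / 2 * v i)
    (b' : Fin d → ℝ) (S' : Finset (Fin d))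
    (hb' : ∀ i, ∃ w : ℤ, b' i = 2 * α * (w : ℝ) + α / 2 * v i)
    (himg : (fun x i => h i (x i)) '' cubeVerts d α b S = cubeVerts d (2 * α) b' S') :
    ∀ j ∈ S',
      ∃ j' ∈ S,
        (((fun x i => h i (x i)) '' cubeVerts d α b (S.erase j')
              = cubeVerts d (2 * α) b' (S'.erase j) ∧
          (fun x i => h i (x i)) ''
              cubeVerts d α (Function.update b j' (b j' + α)) (S.erase j')
              = cubeVerts d (2 * α) (Function.update b' j (b' j + 2 * α)) (S'.erase j)) ∨
         ((fun x i => h i (x i)) '' cubeVerts d α b (S.erase j')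
              = cubeVerts d (2 * α) (Function.update b' j (b' j + 2 * α)) (S'.erase j) ∧
          (fun x i => h i (x i)) ''
              cubeVerts d α (Function.update b j' (b j' + α)) (S.erase j')
              = cubeVerts d (2 * α) b' (S'.erase j))) := by
  -- per-coordinate form of `himg`
  have key : ∀ i, h i '' (if i ∈ S then ({b i, b i + α} : Set ℝ) else {b i})
      = (if i ∈ S' then ({b' i, b' i + 2 * α} : Set ℝ) else {b' i}) := by
    apply coordEq
    · intro i
      apply Set.Nonempty.image
      split <;> simp
    · rw [← imageProd]
      rw [← cubeVerts_eq, ← cubeVerts_eq]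
      exact himg
  intro j hj
  have hne : (b' j : ℝ) ≠ b' j + 2 * α := by intro hEq; linarith
  have keyj : h j '' (if j ∈ S then ({b j, b j + α} : Set ℝ) else {b j})
      = {b' j, b' j + 2 * α} := by rw [key j, if_pos hj]
  have hjS : j ∈ S := by
    by_contra hjS
    rw [if_neg hjS, Set.image_singleton] at keyj
    have h1 : b' j ∈ ({h j (b j)} : Set ℝ) := keyj ▸ (by simp)
    have h2 : b' j + 2 * α ∈ ({h j (b j)} : Set ℝ) := keyj ▸ (by simp)
    simp only [Set.mem_singleton_iff] at h1 h2
    exact hne (h1.trans h2.symm)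
  rw [if_pos hjS, Set.image_pair] at keyj
  have hle : h j (b j) ≤ h j (b j + α) := by
    rcases hmove j (b j) with h1 | h1 <;> rcases hmove j (b j + α) with h2 | h2 <;> linarith
  -- determine the two values
  have m1 : h j (b j) = b' j ∨ h j (b j) = b' j + 2 * α := by
    have : h j (b j) ∈ ({b' j, b' j + 2 * α} : Set ℝ) := keyj ▸ (by simp)
    simpa using this
  have m2 : h j (b j + α) = b' j ∨ h j (b j + α) = b' j + 2 * α := by
    have : h j (b j + α) ∈ ({b' j, b' j + 2 * α} : Set ℝ) := keyj ▸ (by simp)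
    simpa using this
  have m4 : b' j + 2 * α = h j (b j) ∨ b' j + 2 * α = h j (b j + α) := by
    have : b' j + 2 * α ∈ ({h j (b j), h j (b j + α)} : Set ℝ) := keyj ▸ (by simp)
    simpa using this
  have m3 : b' j = h j (b j) ∨ b' j = h j (b j + α) := by
    have : b' j ∈ ({h j (b j), h j (b j + α)} : Set ℝ) := keyj ▸ (by simp)
    simpa using this
  have hA : h j (b j) = b' j := by
    rcases m1 with h1 | h1
    · exact h1
    · rcases m2 with h2 | h2 <;> rcases m3 with h3 | h3 <;> rcases m4 with h4 | h4 <;> linarith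
  have hB : h j (b j + α) = b' j + 2 * α := by
    rcases m2 with h2 | h2
    · rcases m4 with h4 | h4 <;> linarith
    · exact h2
  refine ⟨j, hjS, Or.inl ⟨?_, ?_⟩⟩
  · rw [cubeVerts_eq, cubeVerts_eq, imageProd]
    apply setOf_forall_congr
    intro i
    rcases eq_or_ne i j with rfl | hij
    · simp [Finset.notMem_erase, hA]
    · simpa [Finset.mem_erase, hij] using key i
  · rw [cubeVerts_eq, cubeVerts_eq, imageProd]
    apply setOf_forall_congr
    intro i
    rcases eq_or_ne i j with rfl | hij
    · simp [Finset.notMem_erase, hB]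
    · simpa [Finset.mem_erase, hij, Function.update_of_ne hij] using key i
end

section
/- Let V be a set of vertices of the cubical complex on a grid G and call a face f 'active' (spanned by V) if f ∩ V is nonempty and not contained in any facet of f. Let g be the nearest-point cubical map to the coarser shifted grid G', and suppose V' = g(V). Then for every active face f of G, the face g(f) is active with respect to V' in G'. -/
/-- A face `(b, S)` (of the grid complex with spacing `α`) is active (spanned) with respect to
a vertex set `U`: it meets `U` and `U ∩ f` is not contained in any facet of `f`. -/
def IsActive (d : ℕ) (α : ℝ) (U : Set (Fin d → ℝ)) (b : Fin d → ℝ) (S : Finset (Fin d)) :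
    Prop :=
  (∃ x ∈ U, x ∈ cubeVerts d α b S) ∧
  ∀ j ∈ S,
    (∃ x ∈ U, x ∈ cubeVerts d α b S ∧ x ∉ cubeVerts d α b (S.erase j)) ∧
    (∃ x ∈ U, x ∈ cubeVerts d α b S ∧
      x ∉ cubeVerts d α (Function.update b j (b j + α)) (S.erase j))

lemma cube_self_mem (d : ℕ) (β : ℝ) (b : Fin d → ℝ) (S : Finset (Fin d)) :
    b ∈ cubeVerts d β b S := by
  intro i; split <;> simp

lemma cube_sub (d : ℕ) (β : ℝ) (hβ : β ≠ 0) (b : Fin d → ℝ) (S1 S2 : Finset (Fin d))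
    (hsub : cubeVerts d β b S1 ⊆ cubeVerts d β b S2) : S1 ⊆ S2 := by
  intro i hi
  have hx : Function.update b i (b i + β) ∈ cubeVerts d β b S1 := by
    intro k
    by_cases hk : k = i
    · subst hk; simp [hi]
    · rw [Function.update_of_ne hk]; split <;> simp
  have h2 := hsub hx i
  by_contra hni
  rw [if_neg hni, Function.update_self] at h2
  exact hβ (by linarith)

lemma cube_unique (d : ℕ) (β : ℝ) (hβ : β ≠ 0) (b1 b2 : Fin d → ℝ)
    (S1 S2 : Finset (Fin d)) (heq : cubeVerts d β b1 S1 = cubeVerts d β b2 S2) :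
    b1 = b2 ∧ S1 = S2 := by
  have h12 : b1 ∈ cubeVerts d β b2 S2 := heq ▸ cube_self_mem d β b1 S1
  have h21 : b2 ∈ cubeVerts d β b1 S1 := heq.symm ▸ cube_self_mem d β b2 S2
  have hbb : b1 = b2 := by
    funext i
    have A' : b1 i = b2 i ∨ b1 i = b2 i + β := by
      have A := h12 i; split at A; exacts [A, Or.inl A]
    have B' : b2 i = b1 i ∨ b2 i = b1 i + β := by
      have B := h21 i; split at B; exacts [B, Or.inl B]
    rcases A' with A | A <;> rcases B' with B | B <;> linarith
  subst hbb
  exact ⟨rfl, Finset.Subset.antisymm (cube_sub d β hβ b1 S1 S2 heq.subset)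
    (cube_sub d β hβ b1 S2 S1 heq.superset)⟩

/-- Let `V` be a set of vertices of the grid `αℤ^d`, let
`g x i = h i (x i)` be the nearest-point cubical map towards the coarser shifted grid
`2αℤ^d + (α/2)v`, and let `V' = g(V)`.  If the face `f = (b, S)` is active with respect to
`V` then its image face `g(f) = (b', S')` is active with respect to `V'`. -/
theorem stmt_6 (d : ℕ) (α : ℝ) (hα : 0 < α)
    (V : Set (Fin d → ℝ)) (hV : ∀ x ∈ V, ∀ i, ∃ z : ℤ, x i = α * (z : ℝ))
    (b : Fin d → ℝ) (S : Finset (Fin d))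
    (hb : ∀ i, ∃ z : ℤ, b i = α * (z : ℝ))
    (v : Fin d → ℝ) (hv : ∀ i, v i = 1 ∨ v i = -1)
    (h : Fin d → ℝ → ℝ)
    (hmove : ∀ i t, h i t = t + α / 2 ∨ h i t = t - α / 2)
    (hcoarse : ∀ i (t : ℝ), (∃ z : ℤ, t = α * (z : ℝ)) →
      ∃ w : ℤ, h i t = 2 * α * (w : ℝ) + α / 2 * v i)
    (b' : Fin d → ℝ) (S' : Finset (Fin d))
    (himg : (fun x i => h i (x i)) '' cubeVerts d α b S = cubeVerts d (2 * α) b' S')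
    (hactive : IsActive d α V b S) :
    IsActive d (2 * α) ((fun x i => h i (x i)) '' V) b' S' := by
  classical
  have h2α : (2 : ℝ) * α ≠ 0 := by positivity
  obtain ⟨⟨x0, hx0V, hx0c⟩, hfacets⟩ := hactive
  -- key dichotomy: each coordinate map either collapses or spreads the edge
  have key : ∀ i : Fin d, h i (b i + α) = h i (b i) ∨ h i (b i + α) = h i (b i) + 2 * α := by
    intro i
    obtain ⟨z, hz⟩ := hb i
    obtain ⟨w1, hw1⟩ := hcoarse i (b i) ⟨z, hz⟩
    obtain ⟨w2, hw2⟩ := hcoarse i (b i + α) ⟨z + 1, by push_cast; linarith⟩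
    have hd : h i (b i + α) - h i (b i) = 2 * α * ((w2 : ℝ) - (w1 : ℝ)) := by
      rw [hw1, hw2]; ring
    have imposs : ¬ (h i (b i + α) - h i (b i) = α) := by
      intro he
      have e1 : α * (2 * ((w2 : ℝ) - (w1 : ℝ))) = α * 1 := by linarith
      have e2 : (2 * ((w2 : ℝ) - (w1 : ℝ))) = 1 := mul_left_cancel₀ hα.ne' e1
      have e3 : (2 * w2 - 2 * w1 : ℤ) = 1 := by exact_mod_cast
        (show ((2 * w2 - 2 * w1 : ℤ) : ℝ) = 1 by push_cast; linarith)
      omega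
    rcases hmove i (b i) with h1 | h1 <;> rcases hmove i (b i + α) with h2 | h2
    · exact absurd (by linarith) imposs
    · left; linarith
    · right; linarith
    · exact absurd (by linarith) imposs
  set B : Fin d → ℝ := fun i => h i (b i) with hB
  set T : Finset (Fin d) := S.filter (fun i => h i (b i + α) = h i (b i) + 2 * α) with hT
  -- image of the cube
  have himage : (fun x i => h i (x i)) '' cubeVerts d α b S = cubeVerts d (2 * α) B T := by
    ext y
    constructor
    · rintro ⟨x, hx, rfl⟩
      intro i
      by_cases hiT : i ∈ T
      · rw [if_pos hiT]
        obtain ⟨hiS, hsp⟩ := Finset.mem_filter.mp hiT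
        have hxi := hx i; rw [if_pos hiS] at hxi
        rcases hxi with e | e
        · left; simp only [e, hB]
        · right; simp only [e, hB]; linarith
      · rw [if_neg hiT]
        by_cases hiS : i ∈ S
        · have hcol : h i (b i + α) = h i (b i) := by
            rcases key i with k | k
            · exact k
            · exact absurd (Finset.mem_filter.mpr ⟨hiS, k⟩) hiT
          have hxi := hx i; rw [if_pos hiS] at hxi
          rcases hxi with e | e
          · simp only [e, hB]
          · simp only [e, hB, hcol]
        · have hxi := hx i; rw [if_neg hiS] at hxi
          simp only [hxi, hB]
    · intro hy
      refine ⟨fun i => if i ∈ T ∧ y i = B i + 2 * α then b i + α else b i, ?_, ?_⟩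
      · intro i
        by_cases hiS : i ∈ S
        · rw [if_pos hiS]
          beta_reduce
          split
          · right; rfl
          · left; rfl
        · rw [if_neg hiS]
          beta_reduce
          rw [if_neg (by rintro ⟨hiT, -⟩; exact hiS (Finset.mem_filter.mp hiT).1)]
      · funext i
        show h i (if i ∈ T ∧ y i = B i + 2 * α then b i + α else b i) = y i
        have hyi := hy i
        by_cases hiT : i ∈ T
        · rw [if_pos hiT] at hyi
          obtain ⟨hiS, hsp⟩ := Finset.mem_filter.mp hiT
          rcases hyi with e | e
          · have : ¬ (i ∈ T ∧ y i = B i + 2 * α) := by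
              rintro ⟨-, e'⟩; rw [e] at e'; linarith
            simp only [if_neg this]
            simp only [hB] at e ⊢; exact e.symm
          · simp only [if_pos (And.intro hiT e)]
            simp only [hB] at e ⊢; rw [hsp, ← e]
        · rw [if_neg hiT] at hyi
          rw [if_neg (by rintro ⟨hiT', -⟩; exact hiT hiT')]
          simp only [hB] at hyi ⊢; exact hyi.symm
  -- identify b', S'
  obtain ⟨hb'B, hS'T⟩ := cube_unique d (2 * α) h2α b' B S' T (himg.symm.trans himage)
  subst hb'B; subst hS'T
  constructor
  · exact ⟨(fun i => h i (x0 i)), ⟨x0, hx0V, rfl⟩, himage ▸ ⟨x0, hx0c, rfl⟩⟩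
  · intro j hjT
    obtain ⟨hjS, hsp⟩ := Finset.mem_filter.mp hjT
    obtain ⟨⟨x1, hx1V, hx1c, hx1n⟩, ⟨x2, hx2V, hx2c, hx2n⟩⟩ := hfacets j hjS
    have hx1j : x1 j = b j + α := by
      have hj := hx1c j; rw [if_pos hjS] at hj
      rcases hj with e | e
      · exfalso; apply hx1n
        intro i
        by_cases hij : i = j
        · subst hij; rw [if_neg (Finset.notMem_erase i S)]; exact e
        · have hxi := hx1c i
          by_cases hiS : i ∈ S
          · rw [if_pos (Finset.mem_erase.mpr ⟨hij, hiS⟩)]; rw [if_pos hiS] at hxi; exact hxi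
          · rw [if_neg (fun hc => hiS (Finset.mem_of_mem_erase hc))]
            rw [if_neg hiS] at hxi; exact hxi
      · exact e
    have hx2j : x2 j = b j := by
      have hj := hx2c j; rw [if_pos hjS] at hj
      rcases hj with e | e
      · exact e
      · exfalso; apply hx2n
        intro i
        by_cases hij : i = j
        · subst hij; rw [if_neg (Finset.notMem_erase i S), Function.update_self]; exact e
        · have hxi := hx2c i
          rw [Function.update_of_ne hij] at *
          by_cases hiS : i ∈ S
          · rw [if_pos (Finset.mem_erase.mpr ⟨hij, hiS⟩)]
            rw [if_pos hiS] at hxi; exact hxi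
          · rw [if_neg (fun hc => hiS (Finset.mem_of_mem_erase hc))]
            rw [if_neg hiS] at hxi; exact hxi
    constructor
    · refine ⟨(fun i => h i (x1 i)), ⟨x1, hx1V, rfl⟩, himage ▸ ⟨x1, hx1c, rfl⟩, ?_⟩
      intro hmem
      have hm := hmem j
      rw [if_neg (Finset.notMem_erase j T)] at hm
      simp only [hB] at hm
      rw [hx1j, hsp] at hm
      linarith
    · refine ⟨(fun i => h i (x2 i)), ⟨x2, hx2V, rfl⟩, himage ▸ ⟨x2, hx2c, rfl⟩, ?_⟩
      intro hmem
      have hm := hmem j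
      rw [if_neg (Finset.notMem_erase j T), Function.update_self] at hm
      simp only [hB] at hm
      rw [hx2j] at hm
      linarith
end
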